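/- arXiv:2007.03193 — 4 statements merged into one kernel-verified Lean document; each statement's English description precedes it below -/
import Mathlib

section
/- For all nonnegative integers ℓ, a, and t⋆ (with a sufficiently large, e.g. a ≥ (t⋆+1)ℓ so that all binomial coefficients are in their natural range, or interpreting binomial coefficients as generalized/polynomial binomial coefficients), the alternating sum ∑_{j=0}^{ℓ} (−1)^{ℓ−j} · C(a − t⋆·j, j) · C(a − t⋆·j − j, ℓ − j) equals (−1)^ℓ · (t⋆)^ℓ. In particular, the sum is independent of a. -/
/-!
Since `C(m, j) * C(m - j, ℓ - j) = C(ℓ, j) * C(m, ℓ)`, the sum is the alternating binomial sum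
`∑ⱼ (-1)^(ℓ-j) C(ℓ,j) f(j)`, i.e. the `ℓ`-th forward difference at `0`, of
`f(x) = C(a - t⋆x, ℓ)`. As long as `a - t⋆x` does not truncate, `ℓ! f(x)` is the value at `x` of
the polynomial `∏_{i<ℓ} (a - i - t⋆X)`, of degree at most `ℓ` and with `X^ℓ`-coefficient
`(-t⋆)^ℓ`; the `ℓ`-th forward difference of such a polynomial is `ℓ!` times that coefficient.
-/

open Finset
open scoped Nat fwdDiff

namespace Polynomial

variable {R : Type*} [CommRing R]

theorem fwdDiff_iter_eval_eq_factorial_mul_coeff {P : R[X]} {n : ℕ} (hP : P.natDegree ≤ n) :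
    Δ_[1] ^[n] P.eval = fun _ ↦ (n ! : R) * P.coeff n := by
  rcases hP.lt_or_eq with hlt | rfl
  · rw [fwdDiff_iter_eq_zero_of_degree_lt hlt, coeff_eq_zero_of_natDegree_lt hlt, mul_zero]
    rfl
  · funext x
    simp [fwdDiff_iter_degree_eq_factorial, mul_comm]

theorem sum_range_alternating_choose_mul_eval {P : R[X]} {n : ℕ} (hP : P.natDegree ≤ n) :
    ∑ k ∈ range (n + 1), (-1 : R) ^ (n - k) * n.choose k * P.eval (k : R) = n ! * P.coeff n := by
  have h := fwdDiff_iter_eq_sum_shift 1 P.eval n 0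
  rw [fwdDiff_iter_eval_eq_factorial_mul_coeff hP] at h
  simp [h, zsmul_eq_mul]

variable {ι : Type*} (s : Finset ι) (d : R) (c : ι → R)

theorem natDegree_prod_C_mul_X_add_C_le : (∏ i ∈ s, (C d * X + C (c i))).natDegree ≤ #s :=
  (natDegree_prod_le _ _).trans <| by
    simpa using sum_le_sum fun i _ ↦ natDegree_linear_le (a := d) (b := c i)

theorem coeff_prod_C_mul_X_add_C_card : (∏ i ∈ s, (C d * X + C (c i))).coeff #s = d ^ #s := by
  simpa using
    coeff_prod_of_natDegree_le (s := s) _ 1 fun i _ ↦ natDegree_linear_le (a := d) (b := c i)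

end Polynomial

open Polynomial in
theorem stmt_0 (ℓ tstar a : ℕ) (ha : (tstar + 1) * ℓ ≤ a) :
    ∑ j ∈ Finset.range (ℓ + 1),
      (-1 : ℤ) ^ (ℓ - j) * ((a - tstar * j).choose j : ℤ)
        * ((a - tstar * j - j).choose (ℓ - j) : ℤ)
      = (-1 : ℤ) ^ ℓ * (tstar : ℤ) ^ ℓ := by
  set P : ℤ[X] := ∏ i ∈ range ℓ, (C (-(tstar : ℤ)) * X + C ((a : ℤ) - i))
  have hP : P.natDegree ≤ ℓ := by simpa using natDegree_prod_C_mul_X_add_C_le (range ℓ) _ _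
  have hcoeff : P.coeff ℓ = (-tstar) ^ ℓ := by
    simpa using coeff_prod_C_mul_X_add_C_card (range ℓ) _ _
  have heval : ∀ j ≤ ℓ, P.eval (j : ℤ) = ℓ ! * (a - tstar * j).choose ℓ := by
    intro j hj
    have htj : tstar * j ≤ a := by nlinarith
    rw [← Nat.cast_mul, ← Nat.descFactorial_eq_factorial_mul_choose,
      ← descPochhammer_eval_eq_descFactorial, descPochhammer_eval_eq_prod_range, Nat.cast_sub htj]
    simp only [P, eval_prod, eval_add, eval_mul, eval_C, eval_X]
    exact prod_congr rfl fun i _ ↦ by push_cast; ring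
  apply mul_left_cancel₀ (Nat.cast_ne_zero.mpr ℓ.factorial_ne_zero : (ℓ ! : ℤ) ≠ 0)
  calc (ℓ ! : ℤ) * ∑ j ∈ range (ℓ + 1), (-1 : ℤ) ^ (ℓ - j) * ((a - tstar * j).choose j : ℤ)
        * ((a - tstar * j - j).choose (ℓ - j) : ℤ)
      = ∑ j ∈ range (ℓ + 1), (-1 : ℤ) ^ (ℓ - j) * ℓ.choose j * P.eval (j : ℤ) := by
        rw [mul_sum]
        refine sum_congr rfl fun j hj ↦ ?_
        rw [heval j (Nat.lt_succ_iff.mp (mem_range.mp hj)), mul_assoc _ (_ : ℤ),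
          ← Nat.cast_mul, ← Nat.choose_mul (Nat.lt_succ_iff.mp (mem_range.mp hj))]
        push_cast
        ring
    _ = ℓ ! * P.coeff ℓ := sum_range_alternating_choose_mul_eval hP
    _ = ℓ ! * ((-1 : ℤ) ^ ℓ * (tstar : ℤ) ^ ℓ) := by rw [hcoeff, neg_pow]
end

section
/- Fix an integer t⋆ ≥ 0 and p ∈ (0,1). Define a(t) := ∑_{x=0}^{⌊(t−1)/(t⋆+1)⌋} ∑_{k=1}^{t⋆+1} C(t−k−x·t⋆, x) · 1[t−k−x(t⋆+1) ≥ 0] · p^{x+1} · (1−p)^{t−k−(t⋆+1)x}. Then a(t) → (t⋆+1)·p / (1 + t⋆·p) as t → ∞. -/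
/-!
Let `b m` (`renewalProb`) be the probability that the first `m` time slots split exactly into
failed attempts (one slot each, probability `1 - p`) and successes followed by `tstar` holding
slots (`tstar + 1` slots each, probability `p`). Then `a t = p * ∑_{k=1}^{tstar+1} b (t - k)`, and
splitting off the last block gives the renewal equation
`b (n + tstar + 1) = (1 - p) b (n + tstar) + p b n`.

Every solution `E` of such a lag recurrence `E (n + d + 1) = (1 - p) E (n + d) + p E n` converges:
each new value is a convex combination of values in the preceding window of length `d + 1`, so the
window maximum decreases and the window minimum increases; moreover the minimum of a window enters
every value of the window `2 (d + 1)` steps later with weight at least `p (1 - p) ^ (2 (d + 1))`,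
so the oscillation over a window contracts geometrically. The limit is identified by the conserved
quantity `E (s + d) + p ∑_{j<d} E (s + j)`, which equals `1` for `b`.
-/

open Finset Filter Topology

def LagRecurrence (d : ℕ) (p : ℝ) (E : ℕ → ℝ) : Prop :=
  ∀ n, E (n + (d + 1)) = (1 - p) * E (n + d) + p * E n

noncomputable def windowMax (d : ℕ) (E : ℕ → ℝ) (s : ℕ) : ℝ :=
  (range (d + 1)).sup' nonempty_range_add_one fun j => E (s + j)

/-- Maximum minus minimum of `E` over the window `s, …, s + d`. -/
noncomputable def windowOsc (d : ℕ) (E : ℕ → ℝ) (s : ℕ) : ℝ :=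
  windowMax d E s + windowMax d (-E) s

section Window

variable {d : ℕ} {E : ℕ → ℝ}

lemma le_windowMax {j : ℕ} (hj : j ≤ d) (s : ℕ) : E (s + j) ≤ windowMax d E s :=
  le_sup' (fun j => E (s + j)) (mem_range.mpr (Nat.lt_succ_of_le hj))

lemma exists_windowMax_eq (d : ℕ) (E : ℕ → ℝ) (s : ℕ) :
    ∃ i ≤ d, windowMax d E s = E (s + i) := by
  obtain ⟨i, hi, h⟩ := exists_mem_eq_sup' nonempty_range_add_one fun j => E (s + j)
  exact ⟨i, Nat.lt_succ_iff.mp (mem_range.mp hi), h⟩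

lemma windowOsc_nonneg (d : ℕ) (E : ℕ → ℝ) (s : ℕ) : 0 ≤ windowOsc d E s := by
  have hmax := le_windowMax (E := E) (Nat.zero_le d) s
  have hmin := le_windowMax (E := -E) (Nat.zero_le d) s
  rw [Pi.neg_apply] at hmin
  rw [windowOsc]
  linarith

end Window

lemma one_sub_two_mul_mul_pow_nonneg {p : ℝ} (hp0 : 0 ≤ p) (hp1 : p ≤ 1) {k : ℕ}
    (hk : k ≠ 0) :
    0 ≤ 1 - 2 * (p * (1 - p) ^ k) := by
  have hpow : (1 - p) ^ k ≤ 1 - p := pow_le_of_le_one (sub_nonneg.2 hp1) (by linarith) hk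
  nlinarith [sq_nonneg (2 * p - 1), mul_le_mul_of_nonneg_left hpow hp0]

namespace LagRecurrence

variable {d : ℕ} {p : ℝ} {E : ℕ → ℝ}

lemma neg (hE : LagRecurrence d p E) : LagRecurrence d p (-E) := fun n => by
  simp only [Pi.neg_apply, hE n]
  ring

lemma apply_add_le_windowMax (hE : LagRecurrence d p E) (hp0 : 0 ≤ p) (hp1 : p ≤ 1)
    (s r : ℕ) : E (s + r) ≤ windowMax d E s := by
  induction r using Nat.strong_induction_on with
  | _ r ih =>
    by_cases hr : r ≤ d
    · exact le_windowMax hr s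
    obtain ⟨n, rfl⟩ : ∃ n, r = n + (d + 1) := ⟨r - (d + 1), by omega⟩
    have hprev := ih (n + d) (by omega)
    have hlag := ih n (by omega)
    rw [← add_assoc, hE, add_assoc]
    nlinarith

lemma windowMax_antitone (hE : LagRecurrence d p E) (hp0 : 0 ≤ p) (hp1 : p ≤ 1) :
    Antitone (windowMax d E) :=
  antitone_nat_of_succ_le fun s => sup'_le _ _ fun j _ => by
    simpa only [add_assoc, add_comm 1 j] using hE.apply_add_le_windowMax hp0 hp1 s (1 + j)

lemma exists_tendsto_windowMax (hE : LagRecurrence d p E) (hp0 : 0 ≤ p) (hp1 : p ≤ 1) :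
    ∃ L, Tendsto (windowMax d E) atTop (𝓝 L) := by
  refine ⟨_, tendsto_atTop_ciInf (hE.windowMax_antitone hp0 hp1) ⟨-windowMax d (-E) 0, ?_⟩⟩
  rintro _ ⟨s, rfl⟩
  have hmax := le_windowMax (E := E) (Nat.zero_le d) s
  have hmin := hE.neg.apply_add_le_windowMax hp0 hp1 0 s
  rw [Pi.neg_apply, zero_add] at hmin
  rw [add_zero] at hmax
  linarith

lemma apply_le_windowMax_sub (hE : LagRecurrence d p E) (hp0 : 0 ≤ p) (hp1 : p ≤ 1)
    (i s r : ℕ) :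
    E (s + i + (d + 1) + r)
      ≤ windowMax d E s - p * (1 - p) ^ r * (windowMax d E s - E (s + i)) := by
  have hle := hE.apply_add_le_windowMax hp0 hp1 s
  induction r with
  | zero =>
    have hprev := hle (i + d)
    rw [← add_assoc] at hprev
    rw [add_zero, hE, pow_zero]
    nlinarith
  | succ r ih =>
    have hlag := hle (i + r + 1)
    rw [show s + i + (d + 1) + (r + 1) = s + i + r + 1 + (d + 1) by ring, hE,
      show s + i + r + 1 + d = s + i + (d + 1) + r by ring, pow_succ]
    rw [← add_assoc, ← add_assoc] at hlag
    nlinarith [mul_le_mul_of_nonneg_left ih (sub_nonneg.2 hp1)]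

lemma windowMax_add_le (hE : LagRecurrence d p E) (hp0 : 0 ≤ p) (hp1 : p ≤ 1) (s : ℕ) :
    windowMax d E (s + 2 * (d + 1))
      ≤ windowMax d E s - p * (1 - p) ^ (2 * (d + 1)) * windowOsc d E s := by
  obtain ⟨i, hi, hmin⟩ := exists_windowMax_eq d (-E) s
  have hosc : windowOsc d E s = windowMax d E s - E (s + i) := by
    rw [windowOsc, hmin, Pi.neg_apply, sub_eq_add_neg]
  have hgap : 0 ≤ windowMax d E s - E (s + i) := sub_nonneg.2 (le_windowMax hi s)
  refine sup'_le _ _ fun j hj => ?_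
  have hj : j ≤ d := Nat.lt_succ_iff.mp (mem_range.mp hj)
  have hdecay := hE.apply_le_windowMax_sub hp0 hp1 i s (d + 1 + j - i)
  rw [show s + i + (d + 1) + (d + 1 + j - i) = s + 2 * (d + 1) + j by omega] at hdecay
  have hpow : (1 - p) ^ (2 * (d + 1)) ≤ (1 - p) ^ (d + 1 + j - i) :=
    pow_le_pow_of_le_one (sub_nonneg.2 hp1) (by linarith) (by omega)
  rw [hosc]
  nlinarith [mul_le_mul_of_nonneg_right (mul_le_mul_of_nonneg_left hpow hp0) hgap]

lemma windowOsc_add_le (hE : LagRecurrence d p E) (hp0 : 0 ≤ p) (hp1 : p ≤ 1) (s : ℕ) :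
    windowOsc d E (s + 2 * (d + 1))
      ≤ (1 - 2 * (p * (1 - p) ^ (2 * (d + 1)))) * windowOsc d E s := by
  have hmax := hE.windowMax_add_le hp0 hp1 s
  have hmin := hE.neg.windowMax_add_le hp0 hp1 s
  simp only [windowOsc, neg_neg] at hmax hmin ⊢
  linarith

lemma windowOsc_le_pow (hE : LagRecurrence d p E) (hp0 : 0 ≤ p) (hp1 : p ≤ 1) (n : ℕ) :
    windowOsc d E (2 * (d + 1) * n)
      ≤ (1 - 2 * (p * (1 - p) ^ (2 * (d + 1)))) ^ n * windowOsc d E 0 := by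
  set c := 1 - 2 * (p * (1 - p) ^ (2 * (d + 1)))
  induction n with
  | zero => simp
  | succ n ih =>
    calc windowOsc d E (2 * (d + 1) * (n + 1))
        ≤ c * windowOsc d E (2 * (d + 1) * n) := hE.windowOsc_add_le hp0 hp1 _
      _ ≤ c * (c ^ n * windowOsc d E 0) :=
        mul_le_mul_of_nonneg_left ih (one_sub_two_mul_mul_pow_nonneg hp0 hp1 (by omega))
      _ = c ^ (n + 1) * windowOsc d E 0 := by ring

theorem exists_tendsto (hE : LagRecurrence d p E) (hp0 : 0 < p) (hp1 : p < 1) :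
    ∃ L, Tendsto E atTop (𝓝 L) := by
  obtain ⟨L, hmax⟩ := hE.exists_tendsto_windowMax hp0.le hp1.le
  obtain ⟨L', hmin⟩ := hE.neg.exists_tendsto_windowMax hp0.le hp1.le
  have hrate : 1 - 2 * (p * (1 - p) ^ (2 * (d + 1))) < 1 := by
    have : 0 < 1 - p := sub_pos.2 hp1
    nlinarith [mul_pos hp0 (pow_pos this (2 * (d + 1)))]
  have hmul : Tendsto (fun n => 2 * (d + 1) * n) atTop atTop :=
    tendsto_id.const_mul_atTop' (by omega)
  have hosc : Tendsto (fun n => windowOsc d E (2 * (d + 1) * n)) atTop (𝓝 0) := by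
    refine squeeze_zero (fun n => windowOsc_nonneg d E _) (hE.windowOsc_le_pow hp0.le hp1.le) ?_
    simpa using (tendsto_pow_atTop_nhds_zero_of_lt_one
      (one_sub_two_mul_mul_pow_nonneg hp0.le hp1.le (by omega)) hrate).mul_const (windowOsc d E 0)
  have hsum : L + L' = 0 := tendsto_nhds_unique ((hmax.add hmin).comp hmul) hosc
  refine ⟨L, tendsto_of_tendsto_of_tendsto_of_le_of_le (g := fun s => -windowMax d (-E) s)
    (by simpa [show -L' = L by linarith] using hmin.neg) hmax (fun s => ?_) (fun s => ?_)⟩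
  · simpa [neg_le] using le_windowMax (E := -E) (Nat.zero_le d) s
  · simpa using le_windowMax (E := E) (Nat.zero_le d) s

lemma invariant_eq (hE : LagRecurrence d p E) (s : ℕ) :
    E (s + d) + p * ∑ j ∈ range d, E (s + j) = E d + p * ∑ j ∈ range d, E j := by
  induction s with
  | zero => simp
  | succ s ih =>
    rw [← ih]
    have hshift :
        ∑ j ∈ range d, E (s + 1 + j) + E s = ∑ j ∈ range d, E (s + j) + E (s + d) := by
      rw [← sum_range_succ (fun j => E (s + j)), sum_range_succ']
      simp only [add_zero, add_assoc, add_comm 1]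
    rw [show s + 1 + d = s + (d + 1) by ring, hE s]
    linear_combination p * hshift

theorem tendsto (hE : LagRecurrence d p E) (hp0 : 0 < p) (hp1 : p < 1) :
    Tendsto E atTop (𝓝 ((E d + p * ∑ j ∈ range d, E j) / (1 + d * p))) := by
  obtain ⟨L, hL⟩ := hE.exists_tendsto hp0 hp1
  have hshift (j : ℕ) : Tendsto (fun s => E (s + j)) atTop (𝓝 L) :=
    hL.comp (tendsto_add_atTop_nat j)
  have hinv := (hshift d).add ((tendsto_finsetSum (range d) fun j _ => hshift j).const_mul p)
  simp only [hE.invariant_eq] at hinv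
  have hlim := tendsto_nhds_unique tendsto_const_nhds hinv
  rw [sum_const, card_range, nsmul_eq_mul] at hlim
  convert hL using 2
  rw [hlim]
  field_simp

end LagRecurrence

/-- `((m - x * tstar).choose x)` counts the arrangements of `x` successes (blocks of length
`tstar + 1`) and `m - (tstar + 1) * x` failures (blocks of length `1`) filling `m` slots. -/
noncomputable def renewalTerm (tstar : ℕ) (p : ℝ) (m x : ℕ) : ℝ :=
  if (tstar + 1) * x ≤ m then
    ((m - x * tstar).choose x : ℝ) * p ^ x * (1 - p) ^ (m - (tstar + 1) * x)
  else 0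

noncomputable def renewalProb (tstar : ℕ) (p : ℝ) (m : ℕ) : ℝ :=
  ∑ x ∈ range (m + 1), renewalTerm tstar p m x

section Renewal

variable {tstar : ℕ} {p : ℝ}

lemma renewalTerm_of_eq {m x f : ℕ} (h : m = (tstar + 1) * x + f) :
    renewalTerm tstar p m x = ((f + x).choose x : ℝ) * p ^ x * (1 - p) ^ f := by
  have hmul : (tstar + 1) * x = x * tstar + x := by ring
  rw [renewalTerm, if_pos (by omega), show m - x * tstar = f + x by omega,
    show m - (tstar + 1) * x = f by omega]

lemma renewalTerm_of_lt {m x : ℕ} (h : m < (tstar + 1) * x) : renewalTerm tstar p m x = 0 :=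
  if_neg (by omega)

lemma renewalTerm_zero (m : ℕ) : renewalTerm tstar p m 0 = (1 - p) ^ m := by
  simp [renewalTerm]

lemma renewalTerm_succ_succ (n y : ℕ) :
    renewalTerm tstar p (n + (tstar + 1)) (y + 1)
      = (1 - p) * renewalTerm tstar p (n + tstar) (y + 1) + p * renewalTerm tstar p n y := by
  have hmul : (tstar + 1) * (y + 1) = (tstar + 1) * y + tstar + 1 := by ring
  rcases lt_or_ge (n + (tstar + 1)) ((tstar + 1) * (y + 1)) with h | h
  · rw [renewalTerm_of_lt h, renewalTerm_of_lt (by omega), renewalTerm_of_lt (by omega)]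
    ring
  obtain ⟨_ | f, hf⟩ := Nat.exists_eq_add_of_le h
  · rw [renewalTerm_of_eq hf, renewalTerm_of_lt (by omega), renewalTerm_of_eq (f := 0) (by omega)]
    simp only [zero_add, Nat.choose_self]
    ring
  · have hpascal : (f + 1 + (y + 1)).choose (y + 1)
        = (f + 1 + y).choose y + (f + (y + 1)).choose (y + 1) := by
      rw [show f + (y + 1) = f + 1 + y by ring]
      exact Nat.choose_succ_succ' (f + 1 + y) y
    rw [renewalTerm_of_eq hf, renewalTerm_of_eq (f := f) (by omega),
      renewalTerm_of_eq (f := f + 1) (by omega), hpascal]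
    push_cast
    ring

lemma sum_range_renewalTerm {m N : ℕ} (h : m < (tstar + 1) * N) :
    ∑ x ∈ range N, renewalTerm tstar p m x = renewalProb tstar p m := by
  rcases le_total N (m + 1) with hN | hN
  · refine sum_subset (range_subset_range.2 hN) fun x _ hx => renewalTerm_of_lt ?_
    nlinarith [not_lt.mp (mem_range.not.mp hx)]
  · refine (sum_subset (range_subset_range.2 hN) fun x _ hx => renewalTerm_of_lt ?_).symm
    nlinarith [not_lt.mp (mem_range.not.mp hx)]

lemma renewalProb_of_le {m : ℕ} (h : m ≤ tstar) : renewalProb tstar p m = (1 - p) ^ m := by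
  rw [renewalProb, sum_eq_single 0 (fun x _ hx => renewalTerm_of_lt ?_) (by simp),
    renewalTerm_zero]
  nlinarith [Nat.pos_of_ne_zero hx]

/-- The renewal equation: the last block is either a failure or a success with its holding
slots. -/
lemma lagRecurrence_renewalProb : LagRecurrence tstar p (renewalProb tstar p) := by
  intro n
  have hlast := sum_range_renewalTerm (tstar := tstar) (p := p) (m := n + tstar)
    (N := n + (tstar + 1) + 1) (by nlinarith)
  have hlag := sum_range_renewalTerm (tstar := tstar) (p := p) (m := n)
    (N := n + (tstar + 1)) (by nlinarith)
  rw [sum_range_succ', renewalTerm_zero] at hlast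
  rw [renewalProb, sum_range_succ', renewalTerm_zero]
  simp only [renewalTerm_succ_succ]
  rw [sum_add_distrib, ← mul_sum, ← mul_sum, hlag, ← hlast]
  ring

lemma tendsto_renewalProb (hp0 : 0 < p) (hp1 : p < 1) :
    Tendsto (renewalProb tstar p) atTop (𝓝 (1 / (1 + tstar * p))) := by
  have hinit :
      renewalProb tstar p tstar + p * ∑ j ∈ range tstar, renewalProb tstar p j = 1 := by
    have hgeom := mul_neg_geom_sum (1 - p) tstar
    rw [sub_sub_cancel] at hgeom
    rw [renewalProb_of_le le_rfl, sum_congr rfl fun j hj => renewalProb_of_le (mem_range.mp hj).le,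
      hgeom]
    ring
  simpa [hinit] using (lagRecurrence_renewalProb (tstar := tstar)).tendsto hp0 hp1

lemma sum_choose_eq_mul_sum_renewalProb {t : ℕ} (ht : tstar + 1 ≤ t) :
    ∑ x ∈ range ((t - 1) / (tstar + 1) + 1), ∑ k ∈ Icc 1 (tstar + 1),
        ((t - k - x * tstar).choose x : ℝ) * (if k + x * (tstar + 1) ≤ t then (1 : ℝ) else 0)
          * p ^ (x + 1) * (1 - p) ^ (t - k - (tstar + 1) * x)
      = p * ∑ k ∈ Icc 1 (tstar + 1), renewalProb tstar p (t - k) := by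
  rw [sum_comm, mul_sum]
  refine sum_congr rfl fun k hk => ?_
  obtain ⟨hk1, hk2⟩ := mem_Icc.mp hk
  have hrange := Nat.lt_mul_div_succ (t - 1) (show 0 < tstar + 1 by omega)
  rw [← sum_range_renewalTerm (N := (t - 1) / (tstar + 1) + 1) (by omega), mul_sum]
  refine sum_congr rfl fun x _ => ?_
  have hmul : x * (tstar + 1) = (tstar + 1) * x := mul_comm _ _
  have hcond : k + x * (tstar + 1) ≤ t ↔ (tstar + 1) * x ≤ t - k := by omega
  by_cases hc : k + x * (tstar + 1) ≤ t
  · rw [renewalTerm, if_pos hc, if_pos (hcond.1 hc)]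
    ring
  · rw [renewalTerm, if_neg hc, if_neg (mt hcond.2 hc)]
    ring

end Renewal

theorem stmt_4 (tstar : ℕ) (p : ℝ) (hp0 : 0 < p) (hp1 : p < 1) :
    Tendsto (fun t : ℕ =>
        ∑ x ∈ Finset.range ((t - 1) / (tstar + 1) + 1),
          ∑ k ∈ Finset.Icc 1 (tstar + 1),
            ((t - k - x * tstar).choose x : ℝ)
              * (if k + x * (tstar + 1) ≤ t then (1 : ℝ) else 0)
              * p ^ (x + 1) * (1 - p) ^ (t - k - (tstar + 1) * x))
      atTop (nhds (((tstar : ℝ) + 1) * p / (1 + (tstar : ℝ) * p))) := by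
  have hlim : Tendsto (fun t => p * ∑ k ∈ Icc 1 (tstar + 1), renewalProb tstar p (t - k)) atTop
      (𝓝 (p * ∑ _k ∈ Icc 1 (tstar + 1), 1 / (1 + tstar * p))) :=
    (tendsto_finsetSum _ fun k _ => (tendsto_renewalProb hp0 hp1).comp
      (tendsto_sub_atTop_nat k)).const_mul p
  have hvalue : p * ∑ _k ∈ Icc 1 (tstar + 1), 1 / (1 + tstar * p)
      = ((tstar : ℝ) + 1) * p / (1 + (tstar : ℝ) * p) := by
    rw [sum_const, Nat.card_Icc, nsmul_eq_mul, Nat.add_sub_cancel]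
    push_cast
    ring
  rw [hvalue] at hlim
  refine hlim.congr' ?_
  filter_upwards [eventually_ge_atTop (tstar + 1)] with t ht
  exact (sum_choose_eq_mul_sum_renewalProb ht).symm
end

section
/- For every positive integer t and integer t⋆ ≥ 0 with t > t⋆ + 1, and every p ∈ [0,1], the following two sums add to 1: ∑_{x=0}^{⌊(t−1)/(t⋆+1)⌋} C(t−1−x·t⋆, x) · p^x · (1−p)^{t−(t⋆+1)x} + ∑_{x=0}^{⌊(t−1)/(t⋆+1)⌋} ∑_{k=1}^{t⋆+1} C(t−k−x·t⋆, x) · 1[t−k−x(t⋆+1) ≥ 0] · p^{x+1} · (1−p)^{t−k−(t⋆+1)x} = 1. -/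
open Finset

/-!
With `m = t⋆`, let `F n = ∑ₓ C(n - x m, x) pˣ (1 - p)^(n - (m + 1) x)` (`tilingPoly`): it counts
the tilings of `n` cells by blocks of length `m + 1`, weighted by `p`, and single cells, weighted
by `1 - p`. The two sums are `(1 - p) F (t - 1)` and `p ∑_{k=1}^{m+1} F (t - k)`. Splitting off the
last tile gives `F (n + m + 1) = (1 - p) F (n + m) + p F n`, so
`(1 - p) F (n + m) + p ∑_{i ≤ m} F (n + i)` does not depend on `n`; at `n = 0` only tilings without
blocks contribute, and it equals `(1 - p)^(m + 1) + p ∑_{i ≤ m} (1 - p)^i = 1`.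
-/

namespace MemoryCutoff

variable {R : Type*} [CommRing R] (m : ℕ) (p : R)

def tilingTerm (n x : ℕ) : R :=
  ((n - x * m).choose x : R) * p ^ x * (1 - p) ^ (n - (m + 1) * x)

def tilingPoly (n : ℕ) : R :=
  ∑ x ∈ range (n + 1), tilingTerm m p n x

variable {m}

lemma choose_sub_mul_eq_zero {n x : ℕ} (h : n < (m + 1) * x) : (n - x * m).choose x = 0 := by
  obtain _ | x := x
  · simp at h
  · exact Nat.choose_eq_zero_of_lt (by rw [add_one_mul, mul_comm] at h; omega)

lemma tilingTerm_eq_zero {n x : ℕ} (h : n < (m + 1) * x) : tilingTerm m p n x = 0 := by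
  simp [tilingTerm, choose_sub_mul_eq_zero h]

lemma tilingTerm_zero_right (n : ℕ) : tilingTerm m p n 0 = (1 - p) ^ n := by
  simp [tilingTerm]

lemma tilingTerm_mul_add (x j : ℕ) :
    tilingTerm m p ((m + 1) * x + j) x = ((x + j).choose x : R) * p ^ x * (1 - p) ^ j := by
  rw [tilingTerm, show (m + 1) * x + j - x * m = x + j by rw [add_one_mul, mul_comm]; omega,
    Nat.add_sub_cancel_left]

lemma tilingTerm_add_succ (n x : ℕ) :
    tilingTerm m p (n + m + 1) (x + 1) =
      (1 - p) * tilingTerm m p (n + m) (x + 1) + p * tilingTerm m p n x := by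
  obtain h | ⟨j, rfl⟩ : n < (m + 1) * x ∨ ∃ j, n = (m + 1) * x + j :=
    (lt_or_ge n _).imp_right Nat.exists_eq_add_of_le
  · rw [tilingTerm_eq_zero p h, tilingTerm_eq_zero p (by rw [mul_add_one]; omega),
      tilingTerm_eq_zero p (by rw [mul_add_one]; omega)]
    ring
  rw [show (m + 1) * x + j + m + 1 = (m + 1) * (x + 1) + j by ring, tilingTerm_mul_add,
    tilingTerm_mul_add]
  cases j with
  | zero =>
    rw [tilingTerm_eq_zero p (by rw [mul_add_one]; omega)]
    simp only [add_zero, Nat.choose_self, mul_zero, pow_zero, zero_add]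
    ring
  | succ j =>
    rw [show (m + 1) * x + (j + 1) + m = (m + 1) * (x + 1) + j by ring, tilingTerm_mul_add,
      show x + 1 + (j + 1) = x + j + 1 + 1 by ring, Nat.choose_succ_succ',
      show x + 1 + j = x + j + 1 by ring, show x + (j + 1) = x + j + 1 by ring]
    push_cast
    ring

lemma sum_range_tilingTerm {n N : ℕ} (h : n < (m + 1) * N) :
    ∑ x ∈ range N, tilingTerm m p n x = tilingPoly m p n := by
  have extend : ∀ {N M : ℕ}, n < (m + 1) * N → N ≤ M →
      ∑ x ∈ range N, tilingTerm m p n x = ∑ x ∈ range M, tilingTerm m p n x := by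
    intro N M hN hNM
    refine sum_subset (range_subset_range.2 hNM) fun x _ hx => tilingTerm_eq_zero p ?_
    exact hN.trans_le (Nat.mul_le_mul_left _ (by simpa using hx))
  have hn : n < (m + 1) * (n + 1) := by nlinarith
  rw [tilingPoly, extend h (le_max_left N (n + 1)), extend hn (le_max_right N (n + 1))]

lemma tilingPoly_of_le {n : ℕ} (h : n ≤ m) : tilingPoly m p n = (1 - p) ^ n := by
  rw [← sum_range_tilingTerm p (N := 1) (by omega), sum_range_one, tilingTerm_zero_right]

lemma tilingPoly_add_succ (n : ℕ) :
    tilingPoly m p (n + m + 1) = (1 - p) * tilingPoly m p (n + m) + p * tilingPoly m p n := by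
  have h₁ : tilingPoly m p (n + m) =
      ∑ x ∈ range (n + m + 1), tilingTerm m p (n + m) (x + 1) + tilingTerm m p (n + m) 0 := by
    rw [← sum_range_succ', sum_range_tilingTerm]
    nlinarith
  have h₂ : tilingPoly m p n = ∑ x ∈ range (n + m + 1), tilingTerm m p n x :=
    (sum_range_tilingTerm p (by nlinarith)).symm
  rw [tilingPoly, sum_range_succ', h₁, h₂]
  simp only [tilingTerm_add_succ, tilingTerm_zero_right, sum_add_distrib, ← mul_sum]
  ring

lemma one_sub_mul_tilingPoly_add_mul_sum_range_eq_one (n : ℕ) :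
    (1 - p) * tilingPoly m p (n + m) + p * ∑ i ∈ range (m + 1), tilingPoly m p (n + i) = 1 := by
  induction n with
  | zero =>
    have hsum : ∑ i ∈ range (m + 1), tilingPoly m p (0 + i) = ∑ i ∈ range (m + 1), (1 - p) ^ i :=
      sum_congr rfl fun i hi => by
        rw [zero_add, tilingPoly_of_le p (Nat.lt_succ_iff.1 (mem_range.1 hi))]
    rw [hsum, zero_add, tilingPoly_of_le p le_rfl]
    linear_combination mul_neg_geom_sum (1 - p) (m + 1)
  | succ n ih =>
    have hshift : ∑ i ∈ range (m + 1), tilingPoly m p (n + 1 + i) =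
        ∑ i ∈ range (m + 1), tilingPoly m p (n + i) - tilingPoly m p n +
          tilingPoly m p (n + m + 1) := by
      rw [sum_range_succ, sum_range_succ' (fun i => tilingPoly m p (n + i))]
      simp only [add_assoc, add_comm 1, add_zero]
      ring
    rw [hshift, show n + 1 + m = n + m + 1 by ring]
    linear_combination ih + tilingPoly_add_succ p n

lemma one_sub_mul_tilingPoly_add_mul_sum_Icc_eq_one {t : ℕ} (ht : m + 1 ≤ t) :
    (1 - p) * tilingPoly m p (t - 1) + p * ∑ k ∈ Icc 1 (m + 1), tilingPoly m p (t - k) = 1 := by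
  obtain ⟨n, rfl⟩ : ∃ n, t = n + m + 1 := ⟨t - (m + 1), by omega⟩
  have hreflect : ∑ k ∈ Icc 1 (m + 1), tilingPoly m p (n + m + 1 - k) =
      ∑ i ∈ range (m + 1), tilingPoly m p (n + i) :=
    sum_nbij' (fun k => m + 1 - k) (fun i => m + 1 - i) (by simp; omega) (by simp; omega)
      (by simp; omega) (by simp; omega) fun k hk => congrArg _ (by simp at hk; omega)
  rw [hreflect, Nat.add_sub_cancel]
  exact one_sub_mul_tilingPoly_add_mul_sum_range_eq_one p n

lemma choose_mul_pow_eq_one_sub_mul_tilingTerm {t : ℕ} (ht : 1 ≤ t) (x : ℕ) :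
    ((t - 1 - x * m).choose x : R) * p ^ x * (1 - p) ^ (t - (m + 1) * x) =
      (1 - p) * tilingTerm m p (t - 1) x := by
  rcases le_or_gt ((m + 1) * x) (t - 1) with h | h
  · rw [tilingTerm, show t - (m + 1) * x = t - 1 - (m + 1) * x + 1 by omega, pow_succ]
    ring
  · rw [tilingTerm_eq_zero p h, choose_sub_mul_eq_zero h]
    simp

lemma choose_mul_ite_mul_pow_eq_mul_tilingTerm {t k : ℕ} (hk : k ≤ t) (x : ℕ) :
    ((t - k - x * m).choose x : R) * (if k + x * (m + 1) ≤ t then (1 : R) else 0)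
      * p ^ (x + 1) * (1 - p) ^ (t - k - (m + 1) * x) = p * tilingTerm m p (t - k) x := by
  split_ifs with h
  · rw [tilingTerm]
    ring
  · rw [tilingTerm_eq_zero p (by rw [mul_comm]; omega)]
    simp

end MemoryCutoff

open MemoryCutoff

theorem stmt_7_general (t tstar : ℕ) (ht : tstar + 1 < t) (p : ℝ) :
    (∑ x ∈ Finset.range ((t - 1) / (tstar + 1) + 1),
        ((t - 1 - x * tstar).choose x : ℝ) * p ^ x * (1 - p) ^ (t - (tstar + 1) * x))
    + (∑ x ∈ Finset.range ((t - 1) / (tstar + 1) + 1),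
        ∑ k ∈ Finset.Icc 1 (tstar + 1),
          ((t - k - x * tstar).choose x : ℝ)
            * (if k + x * (tstar + 1) ≤ t then (1 : ℝ) else 0)
            * p ^ (x + 1) * (1 - p) ^ (t - k - (tstar + 1) * x))
    = 1 := by
  have hN : t - 1 < (tstar + 1) * ((t - 1) / (tstar + 1) + 1) := Nat.lt_mul_div_succ _ (by omega)
  refine Eq.trans ?_ (one_sub_mul_tilingPoly_add_mul_sum_Icc_eq_one p ht.le)
  rw [← sum_range_tilingTerm p hN, mul_sum, sum_comm, mul_sum]
  congr 1
  · exact sum_congr rfl fun x _ => choose_mul_pow_eq_one_sub_mul_tilingTerm p (by omega) x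
  · refine sum_congr rfl fun k hk => ?_
    obtain ⟨hk₁, hk₂⟩ := mem_Icc.1 hk
    rw [← sum_range_tilingTerm p (N := (t - 1) / (tstar + 1) + 1) (by omega), mul_sum]
    exact sum_congr rfl fun x _ => choose_mul_ite_mul_pow_eq_mul_tilingTerm p (by omega) x

theorem stmt_7 (t tstar : ℕ) (ht : tstar + 1 < t) (p : ℝ) (hp0 : 0 ≤ p) (hp1 : p ≤ 1) :
    (∑ x ∈ Finset.range ((t - 1) / (tstar + 1) + 1),
        ((t - 1 - x * tstar).choose x : ℝ) * p ^ x * (1 - p) ^ (t - (tstar + 1) * x))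
    + (∑ x ∈ Finset.range ((t - 1) / (tstar + 1) + 1),
        ∑ k ∈ Finset.Icc 1 (tstar + 1),
          ((t - k - x * tstar).choose x : ℝ)
            * (if k + x * (tstar + 1) ≤ t then (1 : ℝ) else 0)
            * p ^ (x + 1) * (1 - p) ^ (t - k - (tstar + 1) * x))
    = 1 :=
  stmt_7_general t tstar ht p
end

section
/- Fix p ∈ (0,1), a nonnegative integer t⋆, and a nonnegative integer x. Define g(t) := ∑_{j=(t⋆+1)x}^{t−1} ((x+1)/(j − t⋆x + 1)) · C(j − t⋆x, x) · p^{x+1} · (1−p)^{j−(t⋆+1)x}. Then g(t) converges as t → ∞ to p · ₂F₁(1, 1, 2+x, 1−p), where ₂F₁ is the Gauss hypergeometric function; i.e., lim_{t→∞} g(t) = p · ∑_{n=0}^{∞} (n!/(∏_{i=1}^{n}(x+1+i))) · (1−p)^n. -/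
/-!
Put `z = 1 - p` and `n = j - (t⋆ + 1) x`. Then `g(t)` is a partial sum of the series
`(x + 1) p ^ (x + 1) G_x(z)` with `G_x(z) = ∑ C(n + x, x) zⁿ / (n + x + 1)`, so the claim is the
identity `₂F₁(1, 1; x + 2; z) = (x + 1) (1 - z) ^ x G_x(z)`. Both sides satisfy the recurrence
`z (x + 1) / (x + 2) F_{x + 1} + (1 - z) F_x = 1`, termwise from Pascal's rule on the `G` side and from
`n! / (x + 2)ₙ - (n + 1)! / (x + 2)ₙ₊₁ = (x + 1) n! / (x + 2)ₙ₊₁` on the `₂F₁` side; both equal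
`∑ zⁿ / (n + 1)` at `x = 0`, and for `z ≠ 0` the recurrence determines `F_{x + 1}` from `F_x`.
-/

open Finset Filter
open scoped Nat

/-- The `n`-th coefficient `(1)ₙ (1)ₙ / ((x + 2)ₙ n!) = n! / (x + 2)ₙ` of `₂F₁(1, 1; x + 2; ·)`. -/
noncomputable def hyperCoeff (x n : ℕ) : ℝ := n ! * (x + 1)! / (n + x + 1)!

noncomputable def hyperSeries (x : ℕ) (z : ℝ) : ℝ := ∑' n, hyperCoeff x n * z ^ n

/-- With `n = j - (t⋆ + 1) x`, the `j`-th summand of `g(t)` is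
`(x + 1) p ^ (x + 1) * chooseCoeff x n * (1 - p) ^ n`. -/
noncomputable def chooseCoeff (x n : ℕ) : ℝ := (n + x).choose x / (((n + x : ℕ) : ℝ) + 1)

noncomputable def chooseSeries (x : ℕ) (z : ℝ) : ℝ := ∑' n, chooseCoeff x n * z ^ n

lemma factorial_mul_prod_Icc (x n : ℕ) :
    (x + 1)! * ∏ i ∈ Icc 1 n, (x + 1 + i) = (n + x + 1)! := by
  induction n with
  | zero => simp
  | succ n ih =>
    rw [prod_Icc_succ_top (by omega), ← mul_assoc, ih, show n + 1 + x + 1 = n + x + 1 + 1 by ring,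
      Nat.factorial_succ (n + x + 1)]
    ring

lemma hyperCoeff_eq_factorial_div_prod (x n : ℕ) :
    hyperCoeff x n = n ! / ∏ i ∈ Icc 1 n, ((x : ℝ) + 1 + i) := by
  rw [hyperCoeff, ← factorial_mul_prod_Icc]
  push_cast
  field_simp

lemma hyperCoeff_nonneg (x n : ℕ) : 0 ≤ hyperCoeff x n := by
  unfold hyperCoeff; positivity

lemma hyperCoeff_le_one (x n : ℕ) : hyperCoeff x n ≤ 1 := by
  rw [hyperCoeff, div_le_one (by positivity)]
  exact_mod_cast Nat.le_of_dvd (Nat.factorial_pos _)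
    (by simpa [add_assoc] using Nat.factorial_mul_factorial_dvd_factorial_add n (x + 1))

@[simp]
lemma hyperCoeff_zero_right (x : ℕ) : hyperCoeff x 0 = 1 := by
  simp [hyperCoeff, Nat.factorial_ne_zero]

lemma hyperCoeff_succ_left (x n : ℕ) :
    (x + 1) * hyperCoeff (x + 1) n = (x + 2) * (hyperCoeff x n - hyperCoeff x (n + 1)) := by
  have factorial_succ_cast (m : ℕ) : ((m + 1)! : ℝ) = (m + 1) * m ! := by
    push_cast [Nat.factorial_succ]; rfl
  rw [hyperCoeff, hyperCoeff, hyperCoeff, show n + (x + 1) + 1 = n + x + 1 + 1 by ring,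
    show n + 1 + x + 1 = n + x + 1 + 1 by ring, factorial_succ_cast (x + 1),
    factorial_succ_cast n, factorial_succ_cast (n + x + 1)]
  push_cast
  field_simp
  ring

lemma chooseCoeff_nonneg (x n : ℕ) : 0 ≤ chooseCoeff x n := by
  unfold chooseCoeff; positivity

lemma chooseCoeff_le_choose (x n : ℕ) : chooseCoeff x n ≤ (n + x).choose x :=
  div_le_self (by positivity) (le_add_of_nonneg_left (Nat.cast_nonneg _))

@[simp]
lemma chooseCoeff_zero_right (x : ℕ) : chooseCoeff x 0 = 1 / (x + 1) := by
  simp [chooseCoeff]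

lemma chooseCoeff_zero_left (n : ℕ) : chooseCoeff 0 n = hyperCoeff 0 n := by
  simp [chooseCoeff, hyperCoeff, Nat.factorial_succ]
  field_simp

lemma chooseCoeff_succ_left_add (x n : ℕ) :
    chooseCoeff (x + 1) n + chooseCoeff x (n + 1) = (n + 1 + x).choose x / (x + 1 : ℝ) := by
  have pascal : ((n + x + 2).choose (x + 1) : ℝ)
      = (n + x + 1).choose x + (n + x + 1).choose (x + 1) := by
    exact_mod_cast Nat.choose_succ_succ' (n + x + 1) x
  have absorb : ((n + x + 2 : ℕ) : ℝ) * (n + x + 1).choose x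
      = (n + x + 2).choose (x + 1) * (x + 1) := by
    exact_mod_cast Nat.add_one_mul_choose_eq (n + x + 1) x
  rw [chooseCoeff, chooseCoeff, show n + (x + 1) = n + x + 1 by ring,
    show n + 1 + x = n + x + 1 by ring, ← add_div, div_eq_div_iff (by positivity) (by positivity)]
  push_cast at absorb ⊢
  linear_combination -(x + 1) * pascal - absorb

section Series

variable {z : ℝ}

lemma summable_hyperCoeff_mul_pow (x : ℕ) (hz : ‖z‖ < 1) :
    Summable fun n ↦ hyperCoeff x n * z ^ n :=
  .of_norm_bounded (summable_geometric_of_lt_one (norm_nonneg z) hz) fun n ↦ by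
    rw [norm_mul, norm_pow, Real.norm_of_nonneg (hyperCoeff_nonneg x n)]
    exact mul_le_of_le_one_left (by positivity) (hyperCoeff_le_one x n)

lemma summable_chooseCoeff_mul_pow (x : ℕ) (hz : ‖z‖ < 1) :
    Summable fun n ↦ chooseCoeff x n * z ^ n :=
  .of_norm_bounded (hasSum_choose_mul_geometric_of_norm_lt_one x
      (by rwa [norm_norm] : ‖‖z‖‖ < 1)).summable fun n ↦ by
    rw [norm_mul, norm_pow, Real.norm_of_nonneg (chooseCoeff_nonneg x n)]
    exact mul_le_mul_of_nonneg_right (chooseCoeff_le_choose x n) (by positivity)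

lemma hyperSeries_succ (x : ℕ) (hz : ‖z‖ < 1) :
    (x + 1) * z * hyperSeries (x + 1) z = (x + 2) * (1 - (1 - z) * hyperSeries x z) := by
  have hB : HasSum _ (hyperSeries x z) := (summable_hyperCoeff_mul_pow x hz).hasSum
  have hB_tail : HasSum (fun n ↦ hyperCoeff x (n + 1) * z ^ (n + 1)) (hyperSeries x z - 1) := by
    simpa using (hasSum_nat_add_iff' 1).mpr hB
  have hB_succ : HasSum (fun n ↦ (x + 1) * z * (hyperCoeff (x + 1) n * z ^ n))
      ((x + 2) * (z * hyperSeries x z - (hyperSeries x z - 1))) := by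
    have hterm (n : ℕ) : (x + 1) * z * (hyperCoeff (x + 1) n * z ^ n)
        = (x + 2) * (z * (hyperCoeff x n * z ^ n) - hyperCoeff x (n + 1) * z ^ (n + 1)) := by
      linear_combination z ^ (n + 1) * hyperCoeff_succ_left x n
    simpa only [hterm] using ((hB.mul_left z).sub hB_tail).mul_left ((x : ℝ) + 2)
  rw [hyperSeries, ← tsum_mul_left, hB_succ.tsum_eq]
  ring

lemma chooseSeries_succ (x : ℕ) (hz : ‖z‖ < 1) :
    z * chooseSeries (x + 1) z + chooseSeries x z = 1 / (1 - z) ^ (x + 1) / (x + 1) := by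
  have hG : HasSum _ (chooseSeries x z) := (summable_chooseCoeff_mul_pow x hz).hasSum
  have hG_tail : HasSum (fun n ↦ chooseCoeff x (n + 1) * z ^ (n + 1))
      (chooseSeries x z - 1 / (x + 1)) := by
    simpa using (hasSum_nat_add_iff' 1).mpr hG
  have hC_tail : HasSum (fun n ↦ ((n + 1 + x).choose x : ℝ) * z ^ (n + 1))
      (1 / (1 - z) ^ (x + 1) - 1) := by
    simpa using (hasSum_nat_add_iff' 1).mpr
      (hasSum_choose_mul_geometric_of_norm_lt_one (𝕜 := ℝ) x hz)
  have hG_succ : HasSum (fun n ↦ z * (chooseCoeff (x + 1) n * z ^ n) +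
      chooseCoeff x (n + 1) * z ^ (n + 1)) ((1 / (1 - z) ^ (x + 1) - 1) / (x + 1)) := by
    have hterm (n : ℕ) : z * (chooseCoeff (x + 1) n * z ^ n) + chooseCoeff x (n + 1) * z ^ (n + 1)
        = ((n + 1 + x).choose x : ℝ) * z ^ (n + 1) / (x + 1) := by
      linear_combination z ^ (n + 1) * chooseCoeff_succ_left_add x n
    simpa only [hterm] using hC_tail.div_const (x + 1 : ℝ)
  have hG1 : HasSum _ (chooseSeries (x + 1) z) := (summable_chooseCoeff_mul_pow (x + 1) hz).hasSum
  linear_combination -hG_succ.unique ((hG1.mul_left z).add hG_tail)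

theorem hyperSeries_eq_chooseSeries (x : ℕ) (hz0 : z ≠ 0) (hz : ‖z‖ < 1) :
    hyperSeries x z = (x + 1) * (1 - z) ^ x * chooseSeries x z := by
  induction x with
  | zero => simp [hyperSeries, chooseSeries, chooseCoeff_zero_left]
  | succ x ih =>
    have h1z : (1 - z) ^ (x + 1) ≠ 0 :=
      pow_ne_zero _ (sub_ne_zero.2 (ne_of_gt (lt_of_le_of_lt (le_abs_self z) hz)))
    have hG : (x + 1) * (1 - z) ^ (x + 1) * chooseSeries x z
        = 1 - (x + 1) * z * (1 - z) ^ (x + 1) * chooseSeries (x + 1) z := by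
      have := chooseSeries_succ x hz
      field_simp at this
      linear_combination this
    refine mul_left_cancel₀ (mul_ne_zero (by positivity) hz0 : ((x : ℝ) + 1) * z ≠ 0) ?_
    rw [hyperSeries_succ x hz, ih]
    push_cast
    linear_combination -(x + 2) * hG

end Series

lemma tendsto_sum_Ico_sub_of_hasSum {M : Type*} [AddCommMonoid M] [TopologicalSpace M]
    {f : ℕ → M} {a : M} (hf : HasSum f a) (m : ℕ) :
    Tendsto (fun t ↦ ∑ j ∈ Ico m t, f (j - m)) atTop (nhds a) :=
  (hf.tendsto_sum_nat.comp (tendsto_sub_atTop_nat m)).congr fun t ↦ by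
    simp [sum_Ico_eq_sum_range]

theorem stmt_19 (p : ℝ) (hp0 : 0 < p) (hp1 : p < 1) (tstar x : ℕ) :
    Tendsto (fun t : ℕ =>
        ∑ j ∈ Finset.Ico ((tstar + 1) * x) t,
          (((x : ℝ) + 1) / (((j - tstar * x : ℕ) : ℝ) + 1))
            * ((j - tstar * x).choose x : ℝ) * p ^ (x + 1) * (1 - p) ^ (j - (tstar + 1) * x))
      atTop
      (nhds (p * ∑' n : ℕ,
        ((n.factorial : ℝ) / ∏ i ∈ Finset.Icc 1 n, ((x : ℝ) + 1 + (i : ℝ))) * (1 - p) ^ n)) := by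
  have hz : ‖1 - p‖ < 1 := by
    rw [Real.norm_eq_abs, abs_lt]
    constructor <;> linarith
  have hsum : HasSum (fun n ↦ (x + 1) * p ^ (x + 1) * (chooseCoeff x n * (1 - p) ^ n))
      (p * hyperSeries x (1 - p)) := by
    rw [hyperSeries_eq_chooseSeries x (by linarith) hz, sub_sub_cancel, show
      p * ((x + 1) * p ^ x * chooseSeries x (1 - p)) = (x + 1) * p ^ (x + 1) * chooseSeries x (1 - p)
      by ring]
    exact (summable_chooseCoeff_mul_pow x hz).hasSum.mul_left _
  simp_rw [← hyperCoeff_eq_factorial_div_prod]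
  refine (tendsto_sum_Ico_sub_of_hasSum hsum ((tstar + 1) * x)).congr fun t ↦
    sum_congr rfl fun j hj ↦ ?_
  rw [show j - tstar * x = j - (tstar + 1) * x + x by grind, chooseCoeff]
  ring
end
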